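/- The subalgebra of C(M, ℝ) generated by the linear representations { f̂ : f ∈ C_c(W) } is dense in C(M, ℝ) with respect to the compact-open topology. Concretely: for every continuous function F : M → ℝ, every compact set K ⊆ M, and every ε > 0, there exist N ∈ ℕ, functions f_1, …, f_N ∈ C_c(W), and a polynomial p ∈ ℝ[x_1, …, x_N] such that sup_{μ ∈ K} | p(∫ f_1 dμ, …, ∫ f_N dμ) − F(μ) | < ε. -/

import Mathlib

/-! Common setup: the birth-death plane, Radon measures, partial optimal transport. -/

noncomputable section

open MeasureTheory Topology Filter Set
open scoped ENNReal

/-- The ambient plane `ℝ²` (with the sup-norm, i.e. `q = ∞`). -/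
abbrev P2 : Type := ℝ × ℝ

/-- The birth-death plane `W = {(b,d) : b < d}`. -/
def Wbd : Set P2 := {p | p.1 < p.2}

/-- The closure `W̄` of the birth-death plane. -/
def Wcl : Set P2 := closure Wbd

/-- The diagonal `Δ`. -/
def Diag : Set P2 := {p | p.1 = p.2}

/-- Distance from a point to the diagonal, `‖x - Δ‖`. -/
def distDiag (x : P2) : ℝ := Metric.infDist x Diag

/-- The pseudometric `d(x,y) = min(‖x-y‖, ‖x-Δ‖ + ‖y-Δ‖)` on `W̄`. -/
def dW (x y : P2) : ℝ := min (dist x y) (distDiag x + distDiag y)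

/-- The support of a Borel measure: points all of whose neighborhoods have
positive measure. -/
def msupport {α : Type*} [TopologicalSpace α] [MeasurableSpace α] (μ : Measure α) : Set α :=
  {x | ∀ U ∈ 𝓝 x, 0 < μ U}

/-- `μ` is a Radon measure on the subspace `S`: it vanishes off `S`, is inner regular
(on relatively open sets) by compact sets, outer regular (by relatively open sets), and finite
on compact subsets of `S`. -/
def RadonOn {α : Type*} [TopologicalSpace α] [MeasurableSpace α] (S : Set α)
    (μ : Measure α) : Prop :=
  μ Sᶜ = 0 ∧
  (∀ U : Set α, IsOpen U → μ (U ∩ S) = ⨆ (K : Set α) (_ : K ⊆ U ∩ S) (_ : IsCompact K), μ K) ∧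
  (∀ E : Set α, E ⊆ S → MeasurableSet E →
    μ E = ⨅ (U : Set α) (_ : IsOpen U) (_ : E ⊆ U), μ (U ∩ S)) ∧
  (∀ K : Set α, K ⊆ S → IsCompact K → μ K < ⊤)

/-- The set `M` of Radon measures on `W`. -/
def MRadon : Set (Measure P2) := {μ | RadonOn Wbd μ}

/-- `pers_∞(μ) = sup{‖x-Δ‖ : x ∈ spt μ}` (valued in `ℝ≥0∞`). -/
def persInf (μ : Measure P2) : ℝ≥0∞ := ⨆ x ∈ msupport μ, ENNReal.ofReal (distDiag x)

/-- The space `M^∞` of Radon measures on `W` with finite `∞`-persistence. -/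
def MInf : Set (Measure P2) := {μ | RadonOn Wbd μ ∧ persInf μ < ⊤}

/-- A coupling (admissible transport plan) between `μ` and `ν`: a Radon measure on
`W̄ × W̄` whose marginals restricted to Borel subsets of `W` are `μ` and `ν`. -/
def IsCoupling (π : Measure (P2 × P2)) (μ ν : Measure P2) : Prop :=
  RadonOn (Wcl ×ˢ Wcl) π ∧
  (∀ A : Set P2, A ⊆ Wbd → MeasurableSet A → π (A ×ˢ Wcl) = μ A) ∧
  (∀ B : Set P2, B ⊆ Wbd → MeasurableSet B → π (Wcl ×ˢ B) = ν B)

/-- The `∞`-cost of a transport plan: `sup {d(x,y) : (x,y) ∈ spt π}`. -/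
def costInf (π : Measure (P2 × P2)) : ℝ≥0∞ :=
  ⨆ p ∈ msupport π, ENNReal.ofReal (dW p.1 p.2)

/-- The partial `∞`-optimal transport distance. -/
def OT (μ ν : Measure P2) : ℝ≥0∞ :=
  ⨅ (π : Measure (P2 × P2)) (_ : IsCoupling π μ ν), costInf π

/-- `W_ε = {(x,y) : y - x > ε}`. -/
def Weps (ε : ℝ) : Set P2 := {p | p.2 - p.1 > ε}

/-- The space `M_f^∞` of off-diagonally finite measures. -/
def Mf : Set (Measure P2) := {μ | μ ∈ MInf ∧ ∀ ε : ℝ, 0 < ε → μ (Weps ε) < ⊤}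

/-- The space `M_fin^∞` of finite measures in `M^∞`. -/
def Mfin : Set (Measure P2) := {μ | μ ∈ MInf ∧ μ Wbd < ⊤}

/-- `f ∈ C_c(W)`: a continuous function, compactly supported, with support contained
in the open set `W` (extended by zero to the plane). -/
def IsCcW (f : P2 → ℝ) : Prop :=
  Continuous f ∧ HasCompactSupport f ∧ tsupport f ⊆ Wbd

/-- Convergence of a sequence of measures to `μ` in the distance `OT_∞`. -/
def OTConv (u : ℕ → Measure P2) (μ : Measure P2) : Prop :=
  Tendsto (fun n => OT (u n) μ) atTop (𝓝 0)

/-- Sequential continuity of `F : M → ℝ` on a subset `T` of the space of measures with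
the (extended pseudo-)metric `OT_∞`; in a metric space this is equivalent to continuity. -/
def SeqContinuousOn (F : Measure P2 → ℝ) (T : Set (Measure P2)) : Prop :=
  ∀ μ ∈ T, ∀ u : ℕ → Measure P2, (∀ n, u n ∈ T) →
    Tendsto (fun n => OT (u n) μ) atTop (𝓝 0) →
    Tendsto (fun n => F (u n)) atTop (𝓝 (F μ))

/-- `K` is a (sequentially) compact subset with respect to `OT_∞`; in a metric space this
is equivalent to compactness. -/
def SeqCompactOT (K : Set (Measure P2)) : Prop :=
  ∀ u : ℕ → Measure P2, (∀ n, u n ∈ K) →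
    ∃ μ ∈ K, ∃ φ : ℕ → ℕ, StrictMono φ ∧ Tendsto (fun n => OT (u (φ n)) μ) atTop (𝓝 0)

/-! Integrals against a countable family of maxima of rational plateau functions separate Radon
measures on `W` (by inner and outer regularity), and each of them is sequentially continuous for
`OT_∞`: a test function lives at positive distance from the diagonal, so a coupling of small
`∞`-cost moves the mass it sees only a little, in the ordinary distance. Hence
`μ ↦ (F μ, (∫ f_T dμ)_T)` maps `K` onto a compact subset of `ℝ × ℝ^ι` (`ι` countable) on which
the first coordinate is a function of the others, and Stone–Weierstrass approximates it uniformly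
by polynomials in finitely many coordinates. -/

open Metric

section PolynomialApproximation

variable {ι : Type*}

theorem exists_mvPolynomial_approx_fst_of_isCompact {Z : Set (ℝ × (ι → ℝ))} (hZ : IsCompact Z)
    (hfun : ∀ z ∈ Z, ∀ w ∈ Z, z.2 = w.2 → z.1 = w.1) {ε : ℝ} (hε : 0 < ε) :
    ∃ p : MvPolynomial ι ℝ, ∀ z ∈ Z, |MvPolynomial.eval z.2 p - z.1| < ε := by
  have : CompactSpace Z := isCompact_iff_compactSpace.1 hZ
  let coord : ι → C(Z, ℝ) := fun i => ⟨fun z => (z : ℝ × (ι → ℝ)).2 i, by fun_prop⟩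
  let fst : C(Z, ℝ) := ⟨fun z => (z : ℝ × (ι → ℝ)).1, by fun_prop⟩
  have hsep : (Algebra.adjoin ℝ (range coord)).SeparatesPoints := by
    intro z w hzw
    have h2 : (z : ℝ × (ι → ℝ)).2 ≠ (w : ℝ × (ι → ℝ)).2 := fun h =>
      hzw (Subtype.ext (Prod.ext (hfun z z.2 w w.2 h) h))
    obtain ⟨i, hi⟩ := Function.ne_iff.1 h2
    exact ⟨coord i, ⟨coord i, Algebra.subset_adjoin ⟨i, rfl⟩, rfl⟩, hi⟩
  have hfst : fst ∈ (Algebra.adjoin ℝ (range coord)).topologicalClosure := by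
    rw [ContinuousMap.subalgebra_topologicalClosure_eq_top_of_separatesPoints _ hsep]
    exact Algebra.mem_top
  obtain ⟨g, hg, hgfst⟩ := Metric.mem_closure_iff.1 hfst ε hε
  rw [Algebra.adjoin_range_eq_range_aeval] at hg
  obtain ⟨p, rfl⟩ := hg
  refine ⟨p, fun z hz => ?_⟩
  have heval : MvPolynomial.eval z.2 p = MvPolynomial.aeval coord p ⟨z, hz⟩ := by
    rw [← ContinuousMap.evalAlgHom_apply ℝ, ← AlgHom.comp_apply, MvPolynomial.comp_aeval]
    rfl
  rw [heval, ← Real.dist_eq, dist_comm]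
  exact (ContinuousMap.dist_apply_le_dist (⟨z, hz⟩ : Z)).trans_lt hgfst

theorem isCompact_image_of_exists_subseq_tendsto {α Y : Type*} [TopologicalSpace Y]
    [TopologicalSpace.PseudoMetrizableSpace Y] {K : Set α} {Ψ : α → Y}
    (hK : ∀ u : ℕ → α, (∀ n, u n ∈ K) →
      ∃ a ∈ K, ∃ φ : ℕ → ℕ, StrictMono φ ∧ Tendsto (fun n => Ψ (u (φ n))) atTop (𝓝 (Ψ a))) :
    IsCompact (Ψ '' K) := by
  refine isCompact_iff_isSeqCompact.2 fun y hy => ?_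
  choose u huK huy using hy
  obtain ⟨a, haK, φ, hφ, hlim⟩ := hK u huK
  exact ⟨Ψ a, mem_image_of_mem Ψ haK, φ, hφ, by simpa only [Function.comp_def, huy] using hlim⟩

theorem exists_mvPolynomial_approx_of_exists_subseq_tendsto {α : Type*} [Countable ι]
    {K : Set α} {F : α → ℝ} {Φ : α → ι → ℝ}
    (hfactor : ∀ a ∈ K, ∀ b ∈ K, Φ a = Φ b → F a = F b)
    (hK : ∀ u : ℕ → α, (∀ n, u n ∈ K) → ∃ a ∈ K, ∃ φ : ℕ → ℕ, StrictMono φ ∧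
      Tendsto (fun n => (F (u (φ n)), Φ (u (φ n)))) atTop (𝓝 (F a, Φ a)))
    {ε : ℝ} (hε : 0 < ε) :
    ∃ (N : ℕ) (g : Fin N → ι) (p : MvPolynomial (Fin N) ℝ),
      ∀ a ∈ K, |MvPolynomial.eval (fun i => Φ a (g i)) p - F a| < ε := by
  -- `ℝ × (ι → ℝ)` is metrizable because `ι` is countable.
  obtain ⟨p, hp⟩ := exists_mvPolynomial_approx_fst_of_isCompact
    (isCompact_image_of_exists_subseq_tendsto (Ψ := fun a => (F a, Φ a)) hK)
    (by rintro _ ⟨a, ha, rfl⟩ _ ⟨b, hb, rfl⟩; exact hfactor a ha b hb) hε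
  obtain ⟨N, g, -, q, rfl⟩ := p.exists_fin_rename
  refine ⟨N, g, q, fun a ha => ?_⟩
  have := hp _ (mem_image_of_mem _ ha)
  rwa [MvPolynomial.eval_rename] at this

end PolynomialApproximation

section Plateau

variable {X : Type*} [PseudoMetricSpace X]

def plateau (c : X) (r s : ℝ) (x : X) : ℝ := max 0 (min 1 ((s - dist x c) / (s - r)))

theorem continuous_plateau (c : X) (r s : ℝ) : Continuous (plateau c r s) := by
  unfold plateau; fun_prop

theorem plateau_le_one (c : X) (r s : ℝ) (x : X) : plateau c r s x ≤ 1 :=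
  max_le zero_le_one (min_le_left _ _)

theorem plateau_eq_one {c : X} {r s : ℝ} (hrs : r < s) {x : X} (hx : dist x c ≤ r) :
    plateau c r s x = 1 := by
  have h : 1 ≤ (s - dist x c) / (s - r) := by rw [le_div_iff₀ (sub_pos.2 hrs)]; linarith
  simp [plateau, min_eq_left h]

theorem tsupport_plateau_subset {c : X} {r s : ℝ} (hrs : r < s) :
    tsupport (plateau c r s) ⊆ closedBall c s := by
  refine closure_minimal (fun x hx => ?_) isClosed_closedBall
  by_contra hxs
  rw [mem_closedBall, not_le] at hxs
  have h : (s - dist x c) / (s - r) ≤ 0 :=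
    div_nonpos_of_nonpos_of_nonneg (by linarith) (sub_pos.2 hrs).le
  exact hx (max_eq_left ((min_le_right _ _).trans h))

end Plateau

theorem isOpen_Wbd : IsOpen Wbd := isOpen_lt continuous_fst continuous_snd

theorem tsupport_max_subset {X M : Type*} [TopologicalSpace X] [Zero M] [LinearOrder M]
    (f g : X → M) : tsupport (fun x => max (f x) (g x)) ⊆ tsupport f ∪ tsupport g :=
  (closure_mono (Function.support_max f g)).trans closure_union.subset

namespace IsCcW

variable {f : P2 → ℝ}

theorem continuous (hf : IsCcW f) : Continuous f := hf.1

theorem hasCompactSupport (hf : IsCcW f) : HasCompactSupport f := hf.2.1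

theorem tsupport_subset (hf : IsCcW f) : tsupport f ⊆ Wbd := hf.2.2

end IsCcW

namespace RadonOn

variable {α : Type*} [TopologicalSpace α] [MeasurableSpace α] {S : Set α} {μ : Measure α}

theorem measure_compl (h : RadonOn S μ) : μ Sᶜ = 0 := h.1

theorem measure_inter_eq_iSup (h : RadonOn S μ) {U : Set α} (hU : IsOpen U) :
    μ (U ∩ S) = ⨆ (K : Set α) (_ : K ⊆ U ∩ S) (_ : IsCompact K), μ K :=
  h.2.1 U hU

theorem measure_eq_iInf (h : RadonOn S μ) {E : Set α} (hES : E ⊆ S) (hE : MeasurableSet E) :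
    μ E = ⨅ (U : Set α) (_ : IsOpen U) (_ : E ⊆ U), μ (U ∩ S) :=
  h.2.2.1 E hES hE

theorem measure_lt_top (h : RadonOn S μ) {K : Set α} (hKS : K ⊆ S) (hK : IsCompact K) :
    μ K < ∞ :=
  h.2.2.2 K hKS hK

end RadonOn

theorem isCcW_zero : IsCcW 0 := ⟨continuous_const, HasCompactSupport.zero, by simp⟩

theorem IsCcW.max {f g : P2 → ℝ} (hf : IsCcW f) (hg : IsCcW g) :
    IsCcW (fun x => max (f x) (g x)) :=
  ⟨hf.continuous.max hg.continuous,
    (hf.hasCompactSupport.union hg.hasCompactSupport).of_isClosed_subset (isClosed_tsupport _)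
      (tsupport_max_subset f g),
    (tsupport_max_subset f g).trans (union_subset hf.tsupport_subset hg.tsupport_subset)⟩

theorem isCcW_plateau {c : P2} {r s : ℝ} (hrs : r < s) (hW : closedBall c s ⊆ Wbd) :
    IsCcW (plateau c r s) :=
  ⟨continuous_plateau c r s,
    (isCompact_closedBall c s).of_isClosed_subset (isClosed_tsupport _)
      (tsupport_plateau_subset hrs),
    (tsupport_plateau_subset hrs).trans hW⟩

abbrev RatPlateau : Type :=
  {t : (ℚ × ℚ) × ℚ × ℚ //
    (t.2.1 : ℝ) < t.2.2 ∧ closedBall (Prod.map Rat.cast Rat.cast t.1 : P2) t.2.2 ⊆ Wbd}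

namespace RatPlateau

def center (b : RatPlateau) : P2 := Prod.map Rat.cast Rat.cast b.1.1

def r (b : RatPlateau) : ℝ := b.1.2.1

def s (b : RatPlateau) : ℝ := b.1.2.2

def toFun (b : RatPlateau) : P2 → ℝ := plateau b.center b.r b.s

theorem r_lt_s (b : RatPlateau) : b.r < b.s := b.2.1

theorem closedBall_subset (b : RatPlateau) : closedBall b.center b.s ⊆ Wbd := b.2.2

theorem isCcW (b : RatPlateau) : IsCcW b.toFun := isCcW_plateau b.r_lt_s b.closedBall_subset

theorem exists_mem_ball_subset {V : Set P2} (hV : IsOpen V) (hVW : V ⊆ Wbd) {x : P2}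
    (hx : x ∈ V) : ∃ b : RatPlateau, x ∈ ball b.center b.r ∧ closedBall b.center b.s ⊆ V := by
  obtain ⟨ρ, hρ, hball⟩ := Metric.isOpen_iff.1 hV x hx
  obtain ⟨c, hc⟩ := (Rat.denseRange_cast.prodMap Rat.denseRange_cast).exists_dist_lt x
    (by positivity : (0 : ℝ) < ρ / 4)
  obtain ⟨r, hr, hrρ⟩ := exists_rat_btwn (by linarith : ρ / 4 < ρ / 2)
  obtain ⟨s, hrs, hsρ⟩ := exists_rat_btwn hrρ
  set c' : P2 := Prod.map Rat.cast Rat.cast c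
  have hsub : closedBall c' s ⊆ V := fun y hy => hball <| mem_ball.2 <| by
    linarith [dist_triangle y c' x, mem_closedBall.1 hy, dist_comm x c']
  exact ⟨⟨(c, r, s), hrs, hsub.trans hVW⟩, mem_ball.2 (hc.trans hr), hsub⟩

end RatPlateau

def plateauMax : List RatPlateau → P2 → ℝ
  | [] => 0
  | b :: T => fun x => max (b.toFun x) (plateauMax T x)

theorem isCcW_plateauMax : ∀ T : List RatPlateau, IsCcW (plateauMax T)
  | [] => isCcW_zero
  | b :: T => b.isCcW.max (isCcW_plateauMax T)

theorem plateauMax_nonneg : ∀ (T : List RatPlateau) (x : P2), 0 ≤ plateauMax T x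
  | [], _ => le_rfl
  | _ :: T, x => (plateauMax_nonneg T x).trans (le_max_right _ _)

theorem plateauMax_le_one : ∀ (T : List RatPlateau) (x : P2), plateauMax T x ≤ 1
  | [], _ => zero_le_one
  | _ :: T, x => max_le (plateau_le_one _ _ _ x) (plateauMax_le_one T x)

theorem le_plateauMax {b : RatPlateau} :
    ∀ {T : List RatPlateau}, b ∈ T → ∀ x, b.toFun x ≤ plateauMax T x
  | _ :: T, hb, x => by
    rcases List.mem_cons.1 hb with rfl | hb
    · exact le_max_left _ _
    · exact (le_plateauMax hb x).trans (le_max_right _ _)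

theorem tsupport_plateauMax_subset {V : Set P2} : ∀ {T : List RatPlateau},
    (∀ b ∈ T, closedBall b.center b.s ⊆ V) → tsupport (plateauMax T) ⊆ V
  | [], _ => by simp [plateauMax]
  | b :: _, h => (tsupport_max_subset _ _).trans <| union_subset
      ((tsupport_plateau_subset b.r_lt_s).trans (h b List.mem_cons_self))
      (tsupport_plateauMax_subset fun b' hb' => h b' (List.mem_cons_of_mem _ hb'))

theorem exists_plateauMax_eq_one {K V : Set P2} (hK : IsCompact K) (hV : IsOpen V)
    (hVW : V ⊆ Wbd) (hKV : K ⊆ V) :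
    ∃ T : List RatPlateau, (∀ x ∈ K, plateauMax T x = 1) ∧ tsupport (plateauMax T) ⊆ V := by
  choose b hxb hbV using fun x : K => RatPlateau.exists_mem_ball_subset hV hVW (hKV x.2)
  obtain ⟨s, hs⟩ := hK.elim_finite_subcover (fun x => ball (b x).center (b x).r)
    (fun _ => isOpen_ball) (fun x hx => mem_iUnion.2 ⟨⟨x, hx⟩, hxb _⟩)
  refine ⟨s.toList.map b, fun y hy => ?_, tsupport_plateauMax_subset ?_⟩
  · obtain ⟨x, hxs, hyx⟩ := mem_iUnion₂.1 (hs hy)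
    refine le_antisymm (plateauMax_le_one _ _) ?_
    calc 1 = (b x).toFun y := (plateau_eq_one (b x).r_lt_s (mem_ball.1 hyx).le).symm
      _ ≤ _ := le_plateauMax (List.mem_map_of_mem (Finset.mem_toList.2 hxs)) y
  · simp only [List.mem_map, Finset.mem_toList]
    rintro _ ⟨x, -, rfl⟩
    exact hbV x

theorem Continuous.integrable_of_measure_tsupport_lt_top {X E : Type*} [TopologicalSpace X]
    [MeasurableSpace X] [OpensMeasurableSpace X] [NormedAddCommGroup E] {μ : Measure X}
    {f : X → E} (hf : Continuous f) (hfs : HasCompactSupport f) (hμ : μ (tsupport f) < ∞) :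
    Integrable f μ := by
  have : IsFiniteMeasure (μ.restrict (tsupport f)) := ⟨by rwa [Measure.restrict_apply_univ]⟩
  exact (integrableOn_iff_integrable_of_support_subset (subset_tsupport f)).1
    (hf.integrable_of_hasCompactSupport hfs)

theorem IsCcW.measure_tsupport_lt_top {f : P2 → ℝ} (hf : IsCcW f) {μ : Measure P2}
    (hμ : RadonOn Wbd μ) : μ (tsupport f) < ∞ :=
  hμ.measure_lt_top hf.tsupport_subset hf.hasCompactSupport

theorem IsCcW.integrable {f : P2 → ℝ} (hf : IsCcW f) {μ : Measure P2} (hμ : RadonOn Wbd μ) :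
    Integrable f μ :=
  hf.continuous.integrable_of_measure_tsupport_lt_top hf.hasCompactSupport
    (hf.measure_tsupport_lt_top hμ)

theorem measure_le_of_lintegral_eq {X : Type*} [MeasurableSpace X] {μ ν : Measure X}
    {K V : Set X} (hK : MeasurableSet K) (hV : MeasurableSet V) {g : X → ℝ≥0∞}
    (hKg : K.indicator 1 ≤ g) (hgV : g ≤ V.indicator 1) (h : ∫⁻ x, g x ∂μ = ∫⁻ x, g x ∂ν) :
    μ K ≤ ν V :=
  calc μ K = ∫⁻ x, K.indicator 1 x ∂μ := (lintegral_indicator_one hK).symm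
    _ ≤ ∫⁻ x, g x ∂μ := lintegral_mono hKg
    _ = ∫⁻ x, g x ∂ν := h
    _ ≤ ∫⁻ x, V.indicator 1 x ∂ν := lintegral_mono hgV
    _ = ν V := lintegral_indicator_one hV

namespace RadonOn

variable {μ ν : Measure P2}

theorem measure_inter_le_of_integral_plateauMax_eq (hμ : RadonOn Wbd μ) (hν : RadonOn Wbd ν)
    (h : ∀ T, ∫ x, plateauMax T x ∂μ = ∫ x, plateauMax T x ∂ν) {U : Set P2} (hU : IsOpen U) :
    μ (U ∩ Wbd) ≤ ν (U ∩ Wbd) := by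
  have hV : IsOpen (U ∩ Wbd) := hU.inter isOpen_Wbd
  rw [hμ.measure_inter_eq_iSup hU]
  refine iSup₂_le fun K hKV => iSup_le fun hK => ?_
  obtain ⟨T, hT1, hTV⟩ := exists_plateauMax_eq_one hK hV inter_subset_right hKV
  have hlint : ∀ ρ : Measure P2, RadonOn Wbd ρ →
      ∫⁻ x, ENNReal.ofReal (plateauMax T x) ∂ρ = ENNReal.ofReal (∫ x, plateauMax T x ∂ρ) :=
    fun ρ hρ => (ofReal_integral_eq_lintegral_ofReal ((isCcW_plateauMax T).integrable hρ)
      (ae_of_all _ (plateauMax_nonneg T))).symm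
  refine measure_le_of_lintegral_eq hK.measurableSet hV.measurableSet (fun x => ?_) (fun x => ?_)
    (by rw [hlint μ hμ, hlint ν hν, h T])
  · by_cases hx : x ∈ K <;> simp [hx, hT1]
  · by_cases hx : x ∈ U ∩ Wbd
    · simp [hx, plateauMax_le_one]
    · simp [hx, image_eq_zero_of_notMem_tsupport (fun h => hx (hTV h))]

theorem ext_of_integral_plateauMax_eq (hμ : RadonOn Wbd μ) (hν : RadonOn Wbd ν)
    (h : ∀ T, ∫ x, plateauMax T x ∂μ = ∫ x, plateauMax T x ∂ν) : μ = ν := by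
  ext E hE
  rw [← measure_inter_conull hμ.measure_compl, ← measure_inter_conull hν.measure_compl,
    hμ.measure_eq_iInf inter_subset_right (hE.inter isOpen_Wbd.measurableSet),
    hν.measure_eq_iInf inter_subset_right (hE.inter isOpen_Wbd.measurableSet)]
  refine iInf_congr fun U => iInf_congr fun hU => iInf_congr fun _ => le_antisymm ?_ ?_
  · exact hμ.measure_inter_le_of_integral_plateauMax_eq hν h hU
  · exact hν.measure_inter_le_of_integral_plateauMax_eq hμ (fun T => (h T).symm) hU

end RadonOn

theorem msupport_eq_support {X : Type*} [TopologicalSpace X] [MeasurableSpace X]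
    (μ : Measure X) : msupport μ = μ.support := by
  ext x
  exact (Measure.mem_support_iff_forall x).symm

theorem integral_eq_of_forall_measure_eq {X : Type*} [MeasurableSpace X] {μ ν : Measure X}
    {S : Set X} (hS : MeasurableSet S) (h : ∀ A ⊆ S, MeasurableSet A → μ A = ν A) {f : X → ℝ}
    (hf : ∀ x ∉ S, f x = 0) : ∫ x, f x ∂μ = ∫ x, f x ∂ν := by
  rw [← setIntegral_eq_integral_of_forall_compl_eq_zero (μ := μ) hf,
    ← setIntegral_eq_integral_of_forall_compl_eq_zero (μ := ν) hf,
    (Measure.restrict_congr_meas hS).2 h]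

theorem distDiag_nonneg (x : P2) : 0 ≤ distDiag x := infDist_nonneg

theorem dW_nonneg (x y : P2) : 0 ≤ dW x y :=
  le_min dist_nonneg (add_nonneg (distDiag_nonneg x) (distDiag_nonneg y))

theorem le_distDiag_of_cthickening_subset {L : Set P2} {δ : ℝ} (h : cthickening δ L ⊆ Wbd)
    {x : P2} (hx : x ∈ L) : δ ≤ distDiag x := by
  by_contra! hlt
  obtain ⟨z, hz, hxz⟩ := (infDist_lt_iff (⟨(0, 0), rfl⟩ : Diag.Nonempty)).1 hlt
  have hzW : z.1 < z.2 := h (mem_cthickening_of_dist_le z x δ L hx (dist_comm z x ▸ hxz.le))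
  exact hzW.ne hz

theorem abs_sub_le_indicator_of_dW_lt {f : P2 → ℝ} {δ₀ δ ε : ℝ}
    (hδ₀ : cthickening δ₀ (tsupport f) ⊆ Wbd) (hδ : δ ≤ δ₀)
    (hf : ∀ x y, dist x y < δ → |f x - f y| ≤ ε) (hε : 0 ≤ ε) {x y : P2} (hxy : dW x y < δ) :
    |f x - f y| ≤ (cthickening δ₀ (tsupport f)).indicator (fun _ => ε) y := by
  by_cases hL : x ∈ tsupport f ∨ y ∈ tsupport f
  · have hdist : dist x y < δ := by
      refine (min_lt_iff.1 hxy).resolve_right (not_lt.2 ?_)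
      rcases hL with hx | hy
      · linarith [le_distDiag_of_cthickening_subset hδ₀ hx, distDiag_nonneg y]
      · linarith [le_distDiag_of_cthickening_subset hδ₀ hy, distDiag_nonneg x]
    have hy : y ∈ cthickening δ₀ (tsupport f) := hL.elim
      (fun hx => mem_cthickening_of_dist_le y x δ₀ _ hx (by rw [dist_comm]; linarith))
      (fun hy => self_subset_cthickening _ hy)
    rw [indicator_of_mem hy]
    exact hf x y hdist
  · push Not at hL
    rw [image_eq_zero_of_notMem_tsupport hL.1, image_eq_zero_of_notMem_tsupport hL.2, sub_self,
      abs_zero]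
    exact indicator_nonneg (fun _ _ => hε) y

namespace IsCoupling

variable {π : Measure (P2 × P2)} {m μ : Measure P2}

theorem map_fst_apply (hπ : IsCoupling π m μ) {A : Set P2} (hA : A ⊆ Wbd)
    (hAm : MeasurableSet A) : π.map Prod.fst A = m A := by
  rw [Measure.map_apply measurable_fst hAm, ← hπ.2.1 A hA hAm,
    ← measure_inter_conull (s := Prod.fst ⁻¹' A) hπ.1.measure_compl, ← prod_univ,
    prod_inter_prod, univ_inter, inter_eq_left.2 (hA.trans subset_closure : A ⊆ Wcl)]

theorem map_snd_apply (hπ : IsCoupling π m μ) {B : Set P2} (hB : B ⊆ Wbd)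
    (hBm : MeasurableSet B) : π.map Prod.snd B = μ B := by
  rw [Measure.map_apply measurable_snd hBm, ← hπ.2.2 B hB hBm,
    ← measure_inter_conull (s := Prod.snd ⁻¹' B) hπ.1.measure_compl, ← univ_prod,
    prod_inter_prod, univ_inter, inter_eq_left.2 (hB.trans subset_closure : B ⊆ Wcl)]

theorem integral_comp_fst (hπ : IsCoupling π m μ) {f : P2 → ℝ} (hf : IsCcW f) :
    ∫ p, f p.1 ∂π = ∫ x, f x ∂m := by
  rw [← integral_map measurable_fst.aemeasurable hf.continuous.aestronglyMeasurable]
  exact integral_eq_of_forall_measure_eq isOpen_Wbd.measurableSet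
    (fun A hA hAm => hπ.map_fst_apply hA hAm)
    (fun x hx => image_eq_zero_of_notMem_tsupport fun h => hx (hf.tsupport_subset h))

theorem integral_comp_snd (hπ : IsCoupling π m μ) {f : P2 → ℝ} (hf : IsCcW f) :
    ∫ p, f p.2 ∂π = ∫ x, f x ∂μ := by
  rw [← integral_map measurable_snd.aemeasurable hf.continuous.aestronglyMeasurable]
  exact integral_eq_of_forall_measure_eq isOpen_Wbd.measurableSet
    (fun B hB hBm => hπ.map_snd_apply hB hBm)
    (fun x hx => image_eq_zero_of_notMem_tsupport fun h => hx (hf.tsupport_subset h))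

theorem integrable_comp_fst (hπ : IsCoupling π m μ) (hm : RadonOn Wbd m) {f : P2 → ℝ}
    (hf : IsCcW f) : Integrable (fun p => f p.1) π :=
  (integrable_map_measure hf.continuous.aestronglyMeasurable measurable_fst.aemeasurable).1 <|
    hf.continuous.integrable_of_measure_tsupport_lt_top hf.hasCompactSupport <| by
      rw [hπ.map_fst_apply hf.tsupport_subset (isClosed_tsupport f).measurableSet]
      exact hf.measure_tsupport_lt_top hm

theorem integrable_comp_snd (hπ : IsCoupling π m μ) (hμ : RadonOn Wbd μ) {f : P2 → ℝ}
    (hf : IsCcW f) : Integrable (fun p => f p.2) π :=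
  (integrable_map_measure hf.continuous.aestronglyMeasurable measurable_snd.aemeasurable).1 <|
    hf.continuous.integrable_of_measure_tsupport_lt_top hf.hasCompactSupport <| by
      rw [hπ.map_snd_apply hf.tsupport_subset (isClosed_tsupport f).measurableSet]
      exact hf.measure_tsupport_lt_top hμ

theorem dW_lt_of_mem_support {δ : ℝ} (hcost : costInf π < ENNReal.ofReal δ) {p : P2 × P2}
    (hp : p ∈ π.support) : dW p.1 p.2 < δ := by
  refine (ENNReal.ofReal_lt_ofReal_iff_of_nonneg (dW_nonneg _ _)).1 (lt_of_le_of_lt ?_ hcost)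
  exact le_iSup₂ (f := fun q (_ : q ∈ msupport π) => ENNReal.ofReal (dW q.1 q.2)) p
    (by rwa [msupport_eq_support])

theorem abs_integral_sub_le (hπ : IsCoupling π m μ) (hm : RadonOn Wbd m)
    (hμ : RadonOn Wbd μ) {f : P2 → ℝ} (hf : IsCcW f) {δ₀ δ ε : ℝ}
    (hδ₀ : cthickening δ₀ (tsupport f) ⊆ Wbd) (hδ : δ ≤ δ₀)
    (hmod : ∀ x y, dist x y < δ → |f x - f y| ≤ ε) (hcost : costInf π < ENNReal.ofReal δ) :
    |∫ x, f x ∂m - ∫ x, f x ∂μ| ≤ ε * μ.real (cthickening δ₀ (tsupport f)) := by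
  set B := cthickening δ₀ (tsupport f)
  have hδpos : 0 < δ := ENNReal.ofReal_pos.1 (zero_le.trans_lt hcost)
  have hε : 0 ≤ ε := by simpa using hmod 0 0 (by simpa using hδpos)
  have hBm : MeasurableSet B := isClosed_cthickening.measurableSet
  have hπB : π (Prod.snd ⁻¹' B) = μ B := by
    rw [← Measure.map_apply measurable_snd hBm, hπ.map_snd_apply hδ₀ hBm]
  have hbound : ∀ᵐ p ∂π, ‖f p.1 - f p.2‖ ≤ (Prod.snd ⁻¹' B).indicator (fun _ => ε) p := by
    filter_upwards [Measure.support_mem_ae] with p hp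
    exact abs_sub_le_indicator_of_dW_lt hδ₀ hδ hmod hε (dW_lt_of_mem_support hcost hp)
  have hint : Integrable ((Prod.snd ⁻¹' B).indicator fun _ => ε) π :=
    (integrable_indicator_iff (measurable_snd hBm)).2 <| integrableOn_const <| by
      rw [hπB]
      exact (hμ.measure_lt_top hδ₀ hf.hasCompactSupport.cthickening).ne
  calc |∫ x, f x ∂m - ∫ x, f x ∂μ| = ‖∫ p, (f p.1 - f p.2) ∂π‖ := by
        rw [integral_sub (hπ.integrable_comp_fst hm hf) (hπ.integrable_comp_snd hμ hf),
          hπ.integral_comp_fst hf, hπ.integral_comp_snd hf, Real.norm_eq_abs]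
    _ ≤ ∫ p, (Prod.snd ⁻¹' B).indicator (fun _ => ε) p ∂π :=
        norm_integral_le_of_norm_le hint hbound
    _ = ε * μ.real B := by
        rw [integral_indicator_const _ (measurable_snd hBm), measureReal_def, hπB, smul_eq_mul,
          mul_comm, measureReal_def]

end IsCoupling

theorem exists_coupling_costInf_lt {m μ : Measure P2} {r : ℝ≥0∞} (h : OT m μ < r) :
    ∃ π, IsCoupling π m μ ∧ costInf π < r := by
  simpa only [OT, iInf_lt_iff, exists_prop] using h

theorem tendsto_integral_of_tendsto_OT {f : P2 → ℝ} (hf : IsCcW f) {μ : Measure P2}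
    (hμ : RadonOn Wbd μ) {u : ℕ → Measure P2} (hu : ∀ n, RadonOn Wbd (u n))
    (hOT : Tendsto (fun n => OT (u n) μ) atTop (𝓝 0)) :
    Tendsto (fun n => ∫ x, f x ∂u n) atTop (𝓝 (∫ x, f x ∂μ)) := by
  obtain ⟨δ₀, hδ₀, hB⟩ :=
    hf.hasCompactSupport.isCompact.exists_cthickening_subset_open isOpen_Wbd hf.tsupport_subset
  set C := μ.real (cthickening δ₀ (tsupport f))
  have hC : 0 ≤ C := measureReal_nonneg
  rw [Metric.tendsto_atTop]
  intro ε hε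
  obtain ⟨δ, hδ, hmod⟩ := Metric.uniformContinuous_iff.1
    (hf.hasCompactSupport.uniformContinuous_of_continuous hf.continuous) (ε / (C + 1))
    (by positivity)
  obtain ⟨N, hN⟩ := eventually_atTop.1
    (hOT.eventually (gt_mem_nhds (ENNReal.ofReal_pos.2 (lt_min hδ hδ₀))))
  refine ⟨N, fun n hn => ?_⟩
  obtain ⟨π, hπ, hcost⟩ := exists_coupling_costInf_lt (hN n hn)
  rw [Real.dist_eq]
  calc |∫ x, f x ∂u n - ∫ x, f x ∂μ| ≤ ε / (C + 1) * C :=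
        hπ.abs_integral_sub_le (hu n) hμ hf hB (min_le_right _ _)
          (fun x y hxy => (Real.dist_eq _ _ ▸ hmod (hxy.trans_le (min_le_left _ _))).le) hcost
    _ < ε := by
        rw [div_mul_eq_mul_div, div_lt_iff₀ (by linarith)]
        nlinarith

/-- The subalgebra of `C(M,ℝ)` generated by the linear representations
`{f̂ : f ∈ C_c(W)}` is dense in the compact-open topology: for every continuous
`F : M → ℝ`, compact `K ⊆ M` and `ε > 0` there are `f_1, …, f_N ∈ C_c(W)` and a real
polynomial `p` in `N` variables with
`sup_{μ ∈ K} |p(∫ f_1 dμ, …, ∫ f_N dμ) - F(μ)| < ε`. -/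
theorem polynomial_linear_representation_approximation
    (F : Measure P2 → ℝ) (hF : SeqContinuousOn F MRadon)
    (K : Set (Measure P2)) (hKM : K ⊆ MRadon) (hK : SeqCompactOT K)
    (ε : ℝ) (hε : 0 < ε) :
    ∃ (N : ℕ) (f : Fin N → P2 → ℝ), (∀ i, IsCcW (f i)) ∧
      ∃ p : MvPolynomial (Fin N) ℝ,
        ∀ μ ∈ K, |MvPolynomial.eval (fun i => ∫ x, f i x ∂μ) p - F μ| < ε := by
  have hfactor : ∀ μ ∈ K, ∀ ν ∈ K, (fun T => ∫ x, plateauMax T x ∂μ) =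
      (fun T => ∫ x, plateauMax T x ∂ν) → F μ = F ν := fun μ hμ ν hν h =>
    congrArg F ((hKM hμ).ext_of_integral_plateauMax_eq (hKM hν) (congrFun h))
  have hsubseq : ∀ u : ℕ → Measure P2, (∀ n, u n ∈ K) → ∃ μ ∈ K, ∃ φ : ℕ → ℕ, StrictMono φ ∧
      Tendsto (fun n => (F (u (φ n)), fun T => ∫ x, plateauMax T x ∂u (φ n))) atTop
        (𝓝 (F μ, fun T => ∫ x, plateauMax T x ∂μ)) := by
    intro u hu
    obtain ⟨μ, hμK, φ, hφ, hOT⟩ := hK u hu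
    have hu' : ∀ n, u (φ n) ∈ MRadon := fun n => hKM (hu (φ n))
    exact ⟨μ, hμK, φ, hφ, (hF μ (hKM hμK) _ hu' hOT).prodMk_nhds (tendsto_pi_nhds.2 fun T =>
      tendsto_integral_of_tendsto_OT (isCcW_plateauMax T) (hKM hμK) hu' hOT)⟩
  obtain ⟨N, g, p, hp⟩ := exists_mvPolynomial_approx_of_exists_subseq_tendsto hfactor hsubseq hε
  exact ⟨N, fun i => plateauMax (g i), fun i => isCcW_plateauMax (g i), p, hp⟩
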